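/- arXiv:1907.07934 — 9 statements merged into one kernel-verified Lean document; each statement's English description precedes it below -/
import Mathlib

section
/- Let X₁,…,X_d be Polish spaces, and for each i let μ_i ∈ P(X_i), let Δ_i ⊆ P(X_i) be a Borel set, and let ν_i be a Borel probability measure on P(X_i) with ν_i(Δ_i) = 1 such that μ_i is the barycenter of ν_i (i.e. ∫ φ dμ_i = ∫ (∫ φ ds) dν_i(s) for every bounded continuous φ : X_i → ℝ). Then the product measure μ = μ₁ ⊗ ⋯ ⊗ μ_d is the barycenter of the product measure ν = ν₁ ⊗ ⋯ ⊗ ν_d in the product space: ν(Δ₁ × ⋯ × Δ_d) = 1 and for every bounded continuous φ : X₁ × ⋯ × X_d → ℝ, ∫ φ dμ = ∫_{P(X₁) × ⋯ × P(X_d)} (∫ φ d(s₁ ⊗ ⋯ ⊗ s_d)) dν(s₁,…,s_d). -/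
/-
Testing against bounded continuous functions, which determine finite Borel measures, the
barycenter condition says that `μᵢ` is the mixture `νᵢ.bind (↑)` of the measures `s` drawn
from `νᵢ`. Mixtures commute with products: on a box `∏ tᵢ` both `pi (νᵢ.bind κᵢ)` and
`(pi ν).bind (fun s => pi (κᵢ (sᵢ)))` take the value `∏ᵢ ∫ κᵢ(·)(tᵢ) dνᵢ`, because the
coordinates are independent under `pi ν`. Integrating `φ` against a mixture is then the
iterated integral, and `(pi ν)(∏ Δᵢ) = ∏ νᵢ(Δᵢ) = 1`.
-/

open MeasureTheory ProbabilityTheory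
open scoped ENNReal

theorem MeasureTheory.Measure.integral_bind {α β E : Type*} [MeasurableSpace α]
    [MeasurableSpace β] [NormedAddCommGroup E] [NormedSpace ℝ E] {m : Measure α}
    {T : α → Measure β} (hT : Measurable T) {f : β → E} (hf : Integrable f (m.bind T)) :
    ∫ x, f x ∂m.bind T = ∫ a, ∫ x, f x ∂T a ∂m :=
  Kernel.integral_comp (η := ⟨T, hT⟩) (κ := Kernel.const Unit m) (a := ()) hf

section Giry

variable {Ω : Type*} [TopologicalSpace Ω] [MeasurableSpace Ω] [BorelSpace Ω]
  [HasOuterApproxClosed Ω] [MeasurableSpace (ProbabilityMeasure Ω)]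
  [OpensMeasurableSpace (ProbabilityMeasure Ω)]

-- By the portmanteau theorem `s ↦ s F` is upper semicontinuous for closed `F`.
theorem MeasureTheory.ProbabilityMeasure.measurable_apply_of_isClosed {F : Set Ω}
    (hF : IsClosed F) :
    Measurable fun s : ProbabilityMeasure Ω => (s : Measure Ω) F :=
  (upperSemicontinuous_iff_limsup_le.2 fun _ =>
    ProbabilityMeasure.limsup_measure_closed_le_of_tendsto Filter.tendsto_id hF).measurable

theorem MeasureTheory.ProbabilityMeasure.measurable_toMeasure :
    Measurable fun s : ProbabilityMeasure Ω => (s : Measure Ω) :=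
  .measure_of_isPiSystem_of_isProbabilityMeasure
    (BorelSpace.measurable_eq.trans borel_eq_generateFrom_isClosed) isPiSystem_isClosed
    fun _ hF => ProbabilityMeasure.measurable_apply_of_isClosed hF

theorem eq_bind_of_forall_integral_eq {μ : Measure Ω} [IsFiniteMeasure μ]
    {ν : Measure (ProbabilityMeasure Ω)} [IsProbabilityMeasure ν]
    (h : ∀ g : Ω → ℝ, Continuous g → (∃ C : ℝ, ∀ x, |g x| ≤ C) →
      ∫ x, g x ∂μ = ∫ s, (∫ x, g x ∂(s : Measure Ω)) ∂ν) :
    μ = ν.bind (↑) := by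
  have := isProbabilityMeasure_bind
    ProbabilityMeasure.measurable_toMeasure.aemeasurable (ae_of_all ν fun s => s.2)
  refine ext_of_forall_integral_eq_of_IsFiniteMeasure fun f => ?_
  rw [h f f.continuous ⟨‖f‖, f.norm_coe_le_norm⟩,
    Measure.integral_bind ProbabilityMeasure.measurable_toMeasure (f.integrable _)]

end Giry

section Pi

variable {ι : Type*} [Fintype ι] {α β : ι → Type*} [∀ i, MeasurableSpace (α i)]
  [∀ i, MeasurableSpace (β i)]

theorem lintegral_pi_prod_eq_prod (μ : ∀ i, Measure (α i)) [∀ i, IsProbabilityMeasure (μ i)]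
    {f : ∀ i, α i → ℝ≥0∞} (hf : ∀ i, Measurable (f i)) :
    ∫⁻ x, ∏ i, f i (x i) ∂Measure.pi μ = ∏ i, ∫⁻ y, f i y ∂μ i := by
  rw [lintegral_prod_eq_prod_lintegral_of_indepFun Finset.univ _
    (iIndepFun_pi fun i => (hf i).aemeasurable) fun i => (hf i).comp (measurable_pi_apply i)]
  exact Finset.prod_congr rfl fun i _ => (measurePreserving_eval μ i).lintegral_comp (hf i)

theorem measurable_pi_measure {κ : ∀ i, α i → Measure (β i)}
    [∀ i a, IsProbabilityMeasure (κ i a)] (hκ : ∀ i, Measurable (κ i)) :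
    Measurable fun a : ∀ i, α i => Measure.pi fun i => κ i (a i) := by
  refine .measure_of_isPiSystem_of_isProbabilityMeasure generateFrom_pi.symm isPiSystem_pi ?_
  rintro _ ⟨t, ht, rfl⟩
  simp_rw [Measure.pi_pi]
  exact Finset.measurable_prod _ fun i _ =>
    (Measure.measurable_coe (ht i (Set.mem_univ i))).comp ((hκ i).comp (measurable_pi_apply i))

theorem pi_bind_eq_bind_pi (ν : ∀ i, Measure (α i)) [∀ i, IsProbabilityMeasure (ν i)]
    {κ : ∀ i, α i → Measure (β i)} [∀ i a, IsProbabilityMeasure (κ i a)]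
    (hκ : ∀ i, Measurable (κ i)) :
    Measure.pi (fun i => (ν i).bind (κ i)) =
      (Measure.pi ν).bind fun a => Measure.pi fun i => κ i (a i) := by
  have : ∀ i, IsProbabilityMeasure ((ν i).bind (κ i)) := fun i =>
    isProbabilityMeasure_bind (hκ i).aemeasurable (ae_of_all _ fun a => inferInstance)
  refine Measure.pi_eq fun t ht => ?_
  rw [Measure.bind_apply (.univ_pi ht) (measurable_pi_measure hκ).aemeasurable]
  simp_rw [Measure.pi_pi]
  rw [lintegral_pi_prod_eq_prod ν (f := fun i a => κ i a (t i))
    fun i => (Measure.measurable_coe (ht i)).comp (hκ i)]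
  exact Finset.prod_congr rfl fun i _ => (Measure.bind_apply (ht i) (hκ i).aemeasurable).symm

end Pi

theorem stmt_2_general
    {d : ℕ} (X : Fin d → Type*) [∀ i, TopologicalSpace (X i)] [∀ i, PolishSpace (X i)]
    [∀ i, MeasurableSpace (X i)] [∀ i, BorelSpace (X i)]
    [∀ i, MeasurableSpace (ProbabilityMeasure (X i))]
    [∀ i, BorelSpace (ProbabilityMeasure (X i))]
    (μ : ∀ i, ProbabilityMeasure (X i)) (Δ : ∀ i, Set (ProbabilityMeasure (X i)))
    (ν : ∀ i, Measure (ProbabilityMeasure (X i)))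
    [hνprob : ∀ i, IsProbabilityMeasure (ν i)] (hνΔ : ∀ i, ν i (Δ i) = 1)
    (hbary : ∀ i, ∀ g : X i → ℝ, Continuous g → (∃ C : ℝ, ∀ x, |g x| ≤ C) →
      ∫ x, g x ∂(μ i : Measure (X i)) = ∫ s, (∫ x, g x ∂(s : Measure (X i))) ∂(ν i)) :
    (Measure.pi ν) (Set.univ.pi Δ) = 1 ∧
    ∀ φ : (∀ i, X i) → ℝ, Continuous φ → (∃ C : ℝ, ∀ x, |φ x| ≤ C) →
      ∫ x, φ x ∂(Measure.pi fun i => (μ i : Measure (X i))) =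
        ∫ s : ∀ i, ProbabilityMeasure (X i),
          (∫ x, φ x ∂(Measure.pi fun i => (s i : Measure (X i)))) ∂(Measure.pi ν) := by
  refine ⟨by simp [Measure.pi_pi, hνΔ], fun φ hφ ⟨C, hC⟩ => ?_⟩
  have hμ : (Measure.pi fun i => (μ i : Measure (X i))) =
      (Measure.pi ν).bind fun s => Measure.pi fun i => (s i : Measure (X i)) := by
    rw [← pi_bind_eq_bind_pi ν fun _ => ProbabilityMeasure.measurable_toMeasure]
    exact congrArg Measure.pi (funext fun i => eq_bind_of_forall_integral_eq (hbary i))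
  have hφint : Integrable φ (Measure.pi fun i => (μ i : Measure (X i))) :=
    .of_bound hφ.aestronglyMeasurable C (ae_of_all _ hC)
  rw [hμ] at hφint ⊢
  exact Measure.integral_bind (measurable_pi_measure fun _ =>
    ProbabilityMeasure.measurable_toMeasure) hφint

theorem stmt_2
    {d : ℕ} (X : Fin d → Type*) [∀ i, TopologicalSpace (X i)] [∀ i, PolishSpace (X i)]
    [∀ i, MeasurableSpace (X i)] [∀ i, BorelSpace (X i)]
    [∀ i, MeasurableSpace (ProbabilityMeasure (X i))]
    [∀ i, BorelSpace (ProbabilityMeasure (X i))]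
    (μ : ∀ i, ProbabilityMeasure (X i)) (Δ : ∀ i, Set (ProbabilityMeasure (X i)))
    (hΔmeas : ∀ i, MeasurableSet (Δ i))
    (ν : ∀ i, Measure (ProbabilityMeasure (X i)))
    [hνprob : ∀ i, IsProbabilityMeasure (ν i)] (hνΔ : ∀ i, ν i (Δ i) = 1)
    (hbary : ∀ i, ∀ g : X i → ℝ, Continuous g → (∃ C : ℝ, ∀ x, |g x| ≤ C) →
      ∫ x, g x ∂(μ i : Measure (X i)) = ∫ s, (∫ x, g x ∂(s : Measure (X i))) ∂(ν i)) :
    (Measure.pi ν) (Set.univ.pi Δ) = 1 ∧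
    ∀ φ : (∀ i, X i) → ℝ, Continuous φ → (∃ C : ℝ, ∀ x, |φ x| ≤ C) →
      ∫ x, φ x ∂(Measure.pi fun i => (μ i : Measure (X i))) =
        ∫ s : ∀ i, ProbabilityMeasure (X i),
          (∫ x, φ x ∂(Measure.pi fun i => (s i : Measure (X i)))) ∂(Measure.pi ν) :=
  stmt_2_general X μ Δ ν (hνprob := hνprob) hνΔ hbary
end

section
/- Let E be a measurable space, A ⊆ E, and Δ ⊆ A a measurable subset. Let φ, ψ : E → ℝ be measurable functions with ψ(x) > 0 for all x ∈ A, such that for every x ∈ A there exists a probability measure ν on E with ν(Δ) = 1, φ and ψ are ν-integrable, φ(x) = ∫ φ dν and ψ(x) = ∫ ψ dν. Then sup_{x ∈ A} φ(x)/ψ(x) = sup_{x ∈ Δ} φ(x)/ψ(x) and inf_{x ∈ A} φ(x)/ψ(x) = inf_{x ∈ Δ} φ(x)/ψ(x); equivalently, for every x ∈ A and every real c, if φ(s) ≤ c·ψ(s) for all s ∈ Δ then φ(x) ≤ c·ψ(x), and if φ(s) ≥ c·ψ(s) for all s ∈ Δ then φ(x) ≥ c·ψ(x). -/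
open MeasureTheory

private lemma core_int {E : Type*} [MeasurableSpace E] {Δ : Set E} (hΔm : MeasurableSet Δ)
    {φ ψ : E → ℝ} {ν : Measure E} [IsProbabilityMeasure ν] (hν : ν Δ = 1)
    (hφ : Integrable φ ν) (hψ : Integrable ψ ν) (c : ℝ) (h : ∀ s ∈ Δ, φ s ≤ c * ψ s) :
    ∫ s, φ s ∂ν ≤ c * ∫ s, ψ s ∂ν := by
  have hc : ν Δᶜ = 0 := by
    rw [measure_compl hΔm (measure_ne_top ν Δ), hν, measure_univ, tsub_self]
  have hae : ∀ᵐ s ∂ν, φ s ≤ c * ψ s := by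
    rw [Filter.eventually_iff, mem_ae_iff]
    exact measure_mono_null (fun s hs hsΔ => hs (h s hsΔ)) hc
  calc ∫ s, φ s ∂ν ≤ ∫ s, c * ψ s ∂ν := integral_mono_ae hφ (hψ.const_mul c) hae
    _ = c * ∫ s, ψ s ∂ν := integral_const_mul c ψ

theorem stmt_5
    {E : Type*} [MeasurableSpace E] (A Δ : Set E) (hΔA : Δ ⊆ A) (hΔm : MeasurableSet Δ)
    (φ ψ : E → ℝ) (hφm : Measurable φ) (hψm : Measurable ψ) (hψpos : ∀ x ∈ A, 0 < ψ x)
    (hbary : ∀ x ∈ A, ∃ ν : Measure E, IsProbabilityMeasure ν ∧ ν Δ = 1 ∧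
      Integrable φ ν ∧ Integrable ψ ν ∧ φ x = ∫ s, φ s ∂ν ∧ ψ x = ∫ s, ψ s ∂ν) :
    (⨆ x ∈ A, ((φ x / ψ x : ℝ) : EReal)) = (⨆ x ∈ Δ, ((φ x / ψ x : ℝ) : EReal)) ∧
    (⨅ x ∈ A, ((φ x / ψ x : ℝ) : EReal)) = (⨅ x ∈ Δ, ((φ x / ψ x : ℝ) : EReal)) := by
  constructor
  · refine le_antisymm ?_ (biSup_mono hΔA)
    refine iSup₂_le fun x hx => ?_
    obtain ⟨ν, hprob, hνΔ, hφi, hψi, hφx, hψx⟩ := hbary x hx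
    have hΔne : Δ.Nonempty := by
      rw [Set.nonempty_iff_ne_empty]
      rintro rfl
      simp at hνΔ
    obtain ⟨s₀, hs₀⟩ := hΔne
    set S := ⨆ x ∈ Δ, ((φ x / ψ x : ℝ) : EReal) with hS
    rcases eq_or_ne S ⊤ with hTop | hTop
    · simp [hTop]
    have hBot : S ≠ ⊥ := by
      have : ((φ s₀ / ψ s₀ : ℝ) : EReal) ≤ S := le_biSup (f := fun x => ((φ x / ψ x : ℝ) : EReal)) hs₀
      exact fun h => by simp [h] at this
    set c : ℝ := S.toReal with hc
    have hSc : S = (c : EReal) := (EReal.coe_toReal hTop hBot).symm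
    have hΔle : ∀ s ∈ Δ, φ s ≤ c * ψ s := by
      intro s hs
      have h1 : ((φ s / ψ s : ℝ) : EReal) ≤ (c : EReal) := hSc ▸ le_biSup (f := fun x => ((φ x / ψ x : ℝ) : EReal)) hs
      have h2 : φ s / ψ s ≤ c := EReal.coe_le_coe_iff.mp h1
      exact (div_le_iff₀ (hψpos s (hΔA hs))).mp h2
    have hmain : φ x ≤ c * ψ x := by
      rw [hφx, hψx]; exact core_int hΔm hνΔ hφi hψi c hΔle
    rw [hSc]
    exact_mod_cast (div_le_iff₀ (hψpos x hx)).mpr hmain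
  · refine le_antisymm (biInf_mono hΔA) ?_
    refine le_iInf₂ fun x hx => ?_
    obtain ⟨ν, hprob, hνΔ, hφi, hψi, hφx, hψx⟩ := hbary x hx
    have hΔne : Δ.Nonempty := by
      rw [Set.nonempty_iff_ne_empty]
      rintro rfl
      simp at hνΔ
    obtain ⟨s₀, hs₀⟩ := hΔne
    set S := ⨅ x ∈ Δ, ((φ x / ψ x : ℝ) : EReal) with hS
    rcases eq_or_ne S ⊥ with hBot | hBot
    · simp [hBot]
    have hTop : S ≠ ⊤ := by
      have : S ≤ ((φ s₀ / ψ s₀ : ℝ) : EReal) := biInf_le (f := fun x => ((φ x / ψ x : ℝ) : EReal)) hs₀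
      exact fun h => by simp [h] at this
    set c : ℝ := S.toReal with hc
    have hSc : S = (c : EReal) := (EReal.coe_toReal hTop hBot).symm
    have hΔle : ∀ s ∈ Δ, -φ s ≤ (-c) * ψ s := by
      intro s hs
      have h1 : (c : EReal) ≤ ((φ s / ψ s : ℝ) : EReal) := hSc ▸ biInf_le (f := fun x => ((φ x / ψ x : ℝ) : EReal)) hs
      have h2 : c ≤ φ s / ψ s := EReal.coe_le_coe_iff.mp h1
      have := (le_div_iff₀ (hψpos s (hΔA hs))).mp h2
      linarith
    have hmain : -φ x ≤ (-c) * ψ x := by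
      have hφi' : Integrable (fun s => -φ s) ν := hφi.neg
      have := core_int hΔm hνΔ hφi' hψi (-c) hΔle
      rw [integral_neg] at this
      rw [hφx, hψx]; linarith
    have hmain' : c * ψ x ≤ φ x := by linarith
    rw [hSc]
    exact_mod_cast (le_div_iff₀ (hψpos x hx)).mpr hmain'
end

section
/- Let X be a Polish space, μ a Borel probability measure on X, and ν a Borel probability measure on P(X) such that μ is the barycenter of ν, i.e. for every bounded continuous φ : X → ℝ, ∫_X φ dμ = ∫_{P(X)} (∫_X φ ds) dν(s). Then for every bounded Borel measurable function q : X → ℝ the barycentrical formula extends: ∫_X q dμ = ∫_{P(X)} (∫_X q ds) dν(s). In particular, the map μ ↦ ∫_X q dμ is measure affine. -/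
/-!
The barycenter of `ν` is the composition of `ν` with the tautological kernel `s ↦ s`. This kernel
is measurable for any σ-algebra on `P(X)` containing the Borel sets: for closed `F`, `s ↦ s F` is
the pointwise limit of the continuous maps `s ↦ ∫ fₙ ds` for continuous `fₙ ↓ 𝟙_F`, and closed sets
form a generating π-system. The hypothesis says that `μ` and the barycenter integrate bounded
continuous functions alike, so they coincide, and for bounded measurable `q` the formula is then
Fubini's theorem for the composition of a measure and a kernel.
-/

open MeasureTheory ProbabilityTheory
open scoped BoundedContinuousFunction

namespace MeasureTheory

lemma Measure.integral_comp {α β E : Type*} [MeasurableSpace α] [MeasurableSpace β]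
    [NormedAddCommGroup E] [NormedSpace ℝ E] {μ : Measure α} {κ : Kernel α β} {f : β → E}
    (hf : Integrable f (κ ∘ₘ μ)) :
    ∫ x, f x ∂(κ ∘ₘ μ) = ∫ a, ∫ x, f x ∂κ a ∂μ := by
  rw [Measure.comp_eq_comp_const_apply] at hf ⊢
  exact Kernel.integral_comp hf

namespace ProbabilityMeasure

variable {X : Type*} [TopologicalSpace X] [HasOuterApproxClosed X] [MeasurableSpace X]
  [BorelSpace X] [MeasurableSpace (ProbabilityMeasure X)]
  [OpensMeasurableSpace (ProbabilityMeasure X)]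

lemma measurable_apply_of_isClosed_s6 {F : Set X} (hF : IsClosed F) :
    Measurable fun s : ProbabilityMeasure X ↦ (s : Measure X) F :=
  measurable_of_tendsto_metrizable
    (fun n ↦ (continuous_lintegral_boundedContinuousFunction (hF.apprSeq n)).measurable)
    (tendsto_pi_nhds.2 fun s ↦ HasOuterApproxClosed.tendsto_lintegral_apprSeq hF s)

lemma measurable_toMeasure_s6 : Measurable ((↑) : ProbabilityMeasure X → Measure X) :=
  .measure_of_isPiSystem_of_isProbabilityMeasure
    (BorelSpace.measurable_eq.trans borel_eq_generateFrom_isClosed) isPiSystem_isClosed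
    fun _ ↦ measurable_apply_of_isClosed_s6

noncomputable def toMeasureKernel : Kernel (ProbabilityMeasure X) X :=
  ⟨(↑), measurable_toMeasure_s6⟩

instance : IsMarkovKernel (toMeasureKernel (X := X)) :=
  ⟨fun s ↦ s.prop⟩

noncomputable def barycenter (ν : Measure (ProbabilityMeasure X)) : Measure X :=
  toMeasureKernel ∘ₘ ν

instance {ν : Measure (ProbabilityMeasure X)} [IsFiniteMeasure ν] :
    IsFiniteMeasure (barycenter ν) := by
  unfold barycenter; infer_instance

lemma integral_barycenter {E : Type*} [NormedAddCommGroup E] [NormedSpace ℝ E]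
    {ν : Measure (ProbabilityMeasure X)} {f : X → E}
    (hf : Integrable f (barycenter ν)) :
    ∫ x, f x ∂(barycenter ν) = ∫ s, ∫ x, f x ∂(s : Measure X) ∂ν :=
  Measure.integral_comp hf

lemma eq_barycenter_of_forall_integral_eq {μ : Measure X} [IsFiniteMeasure μ]
    {ν : Measure (ProbabilityMeasure X)} [IsFiniteMeasure ν]
    (h : ∀ f : X →ᵇ ℝ, ∫ x, f x ∂μ = ∫ s, ∫ x, f x ∂(s : Measure X) ∂ν) :
    μ = barycenter ν :=
  ext_of_forall_integral_eq_of_IsFiniteMeasure fun f ↦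
    (h f).trans (integral_barycenter (f.integrable _)).symm

end ProbabilityMeasure

end MeasureTheory

theorem stmt_6
    {X : Type*} [TopologicalSpace X] [PolishSpace X] [MeasurableSpace X] [BorelSpace X]
    [MeasurableSpace (ProbabilityMeasure X)] [BorelSpace (ProbabilityMeasure X)]
    (μ : ProbabilityMeasure X) (ν : Measure (ProbabilityMeasure X)) [IsProbabilityMeasure ν]
    (hbary : ∀ g : X → ℝ, Continuous g → (∃ C : ℝ, ∀ x, |g x| ≤ C) →
      ∫ x, g x ∂(μ : Measure X) = ∫ s, (∫ x, g x ∂(s : Measure X)) ∂ν)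
    (q : X → ℝ) (hqm : Measurable q) (hqb : ∃ C : ℝ, ∀ x, |q x| ≤ C) :
    ∫ x, q x ∂(μ : Measure X) = ∫ s, (∫ x, q x ∂(s : Measure X)) ∂ν := by
  have hμ : (μ : Measure X) = ProbabilityMeasure.barycenter ν :=
    ProbabilityMeasure.eq_barycenter_of_forall_integral_eq fun f ↦
      hbary f f.continuous ⟨‖f‖, fun x ↦ f.norm_coe_le_norm x⟩
  obtain ⟨C, hC⟩ := hqb
  rw [hμ]
  exact ProbabilityMeasure.integral_barycenter
    (.of_bound hqm.aestronglyMeasurable C (ae_of_all _ hC))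
end

section
/- Let 𝒳 be a metrizable topological space with its Borel σ-algebra, G : 𝒳 → ℝ a continuous function, and p ∈ (0,1). For a Borel probability measure μ on 𝒳 define F_μ(h) = μ({x : G(x) ≤ h}) and the lower quantile Q_p^L(μ) = inf{h ∈ ℝ : F_μ(h) ≥ p}. Then Q_p^L is quasi-convex and lower semicontinuous on P(𝒳): (i) for all probability measures μ, π and λ ∈ [0,1], Q_p^L(λμ + (1−λ)π) ≤ max{Q_p^L(μ), Q_p^L(π)}; (ii) for every α ∈ ℝ the lower level set {μ ∈ P(𝒳) : Q_p^L(μ) ≤ α} is closed for the topology of weak convergence. -/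
open MeasureTheory Filter Topology
open scoped ENNReal

theorem stmt_7
    {𝒳 : Type*} [TopologicalSpace 𝒳] [TopologicalSpace.MetrizableSpace 𝒳]
    [MeasurableSpace 𝒳] [BorelSpace 𝒳]
    (G : 𝒳 → ℝ) (hG : Continuous G) (p : ℝ) (hp : p ∈ Set.Ioo (0 : ℝ) 1)
    (Q : ProbabilityMeasure 𝒳 → ℝ)
    (hQ : Q = fun (μ : ProbabilityMeasure 𝒳) => sInf {h : ℝ | p ≤ ((μ : Measure 𝒳) {x | G x ≤ h}).toReal}) :
    (∀ (μ π σ : ProbabilityMeasure 𝒳) (lam : ℝ≥0∞), lam ≤ 1 →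
      (σ : Measure 𝒳) = lam • (μ : Measure 𝒳) + (1 - lam) • (π : Measure 𝒳) →
      Q σ ≤ max (Q μ) (Q π)) ∧
    ∀ α : ℝ, IsClosed {μ : ProbabilityMeasure 𝒳 | Q μ ≤ α} := by
  obtain ⟨hp0, hp1⟩ := hp
  -- measurability of level sets
  have hCl : ∀ c : ℝ, IsClosed {x : 𝒳 | G x ≤ c} := fun c =>
    IsClosed.preimage hG isClosed_Iic
  have hMeas : ∀ c : ℝ, MeasurableSet {x : 𝒳 | G x ≤ c} := fun c => (hCl c).measurableSet
  set F : ProbabilityMeasure 𝒳 → ℝ → ℝ≥0∞ :=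
    fun ν h => (ν : Measure 𝒳) {x | G x ≤ h} with hF
  have hFne : ∀ ν h, F ν h ≠ ∞ := fun ν h => measure_ne_top _ _
  have hmono : ∀ (ν : ProbabilityMeasure 𝒳) {h₁ h₂ : ℝ}, h₁ ≤ h₂ → F ν h₁ ≤ F ν h₂ :=
    fun ν h₁ h₂ h => measure_mono (fun x hx => le_trans hx h)
  have hmemiff : ∀ (ν : ProbabilityMeasure 𝒳) (h : ℝ),
      (p ≤ ((ν : Measure 𝒳) {x | G x ≤ h}).toReal) ↔ ENNReal.ofReal p ≤ F ν h := by
    intro ν h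
    rw [ENNReal.ofReal_le_iff_le_toReal (hFne ν h)]
  set S : ProbabilityMeasure 𝒳 → Set ℝ :=
    fun ν => {h : ℝ | p ≤ ((ν : Measure 𝒳) {x | G x ≤ h}).toReal} with hS
  have hQ' : ∀ ν, Q ν = sInf (S ν) := by intro ν; rw [hQ]
  -- S is nonempty
  have hne : ∀ ν : ProbabilityMeasure 𝒳, (S ν).Nonempty := by
    intro ν
    have hmonos : Monotone (fun n : ℕ => {x : 𝒳 | G x ≤ (n : ℝ)}) := by
      intro a b hab x hx
      simp only [Set.mem_setOf_eq] at hx ⊢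
      exact le_trans hx (by exact_mod_cast hab)
    have hT := tendsto_measure_iUnion_atTop (μ := (ν : Measure 𝒳)) hmonos
    have hU : (⋃ n : ℕ, {x : 𝒳 | G x ≤ (n : ℝ)}) = Set.univ := by
      ext x
      simp only [Set.mem_iUnion, Set.mem_univ, iff_true, Set.mem_setOf_eq]
      exact exists_nat_ge (G x)
    rw [hU, measure_univ] at hT
    have hlt : ENNReal.ofReal p < 1 := by
      rw [← ENNReal.ofReal_one]
      exact ENNReal.ofReal_lt_ofReal_iff_of_nonneg hp0.le |>.mpr hp1
    have := hT.eventually (eventually_gt_nhds hlt)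
    obtain ⟨n, hn⟩ := this.exists
    exact ⟨(n : ℝ), (hmemiff ν n).mpr hn.le⟩
  -- S is bounded below
  have hbdd : ∀ ν : ProbabilityMeasure 𝒳, BddBelow (S ν) := by
    intro ν
    have hanti : Antitone (fun n : ℕ => {x : 𝒳 | G x ≤ -(n : ℝ)}) := by
      intro a b hab x hx
      simp only [Set.mem_setOf_eq] at hx ⊢
      have : (a:ℝ) ≤ b := by exact_mod_cast hab
      linarith
    have hT := tendsto_measure_iInter_atTop (μ := (ν : Measure 𝒳))
      (fun n => (hMeas _).nullMeasurableSet) hanti ⟨0, hFne ν _⟩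
    have hI : (⋂ n : ℕ, {x : 𝒳 | G x ≤ -(n : ℝ)}) = ∅ := by
      ext x
      simp only [Set.mem_iInter, Set.mem_empty_iff_false, iff_false, not_forall,
        Set.mem_setOf_eq, not_le]
      obtain ⟨n, hn⟩ := exists_nat_gt (-(G x))
      exact ⟨n, by linarith⟩
    rw [hI, measure_empty] at hT
    have hlt : (0 : ℝ≥0∞) < ENNReal.ofReal p := ENNReal.ofReal_pos.mpr hp0
    obtain ⟨n, hn⟩ := (hT.eventually (eventually_lt_nhds hlt)).exists
    refine ⟨-(n : ℝ), fun h hh => ?_⟩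
    by_contra hcon
    push_neg at hcon
    have : ENNReal.ofReal p ≤ F ν (-(n : ℝ)) :=
      le_trans ((hmemiff ν h).mp hh) (hmono ν hcon.le)
    exact absurd (lt_of_le_of_lt this hn) (lt_irrefl _)
  -- key characterization of Q ν ≤ α
  have hkey : ∀ (ν : ProbabilityMeasure 𝒳) (α : ℝ),
      Q ν ≤ α ↔ ∀ h : ℝ, α < h → ENNReal.ofReal p ≤ F ν h := by
    intro ν α
    constructor
    · intro hQα h hαh
      rw [hQ'] at hQα
      obtain ⟨h', hh', hh'lt⟩ := (csInf_lt_iff (hbdd ν) (hne ν)).mp (lt_of_le_of_lt hQα hαh)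
      exact le_trans ((hmemiff ν h').mp hh') (hmono ν hh'lt.le)
    · intro hall
      rw [hQ']
      have : ∀ ε > 0, sInf (S ν) ≤ α + ε := by
        intro ε hε
        exact csInf_le (hbdd ν) ((hmemiff ν _).mpr (hall (α + ε) (by linarith)))
      linarith [le_of_forall_pos_le_add this]
  constructor
  · -- quasi-convexity
    intro μ π σ lam hlam hσ
    rw [hkey]
    intro h hh
    have hμ : ENNReal.ofReal p ≤ F μ h :=
      (hkey μ (Q μ)).mp le_rfl h (lt_of_le_of_lt (le_max_left _ _) hh)
    have hπ : ENNReal.ofReal p ≤ F π h :=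
      (hkey π (Q π)).mp le_rfl h (lt_of_le_of_lt (le_max_right _ _) hh)
    have hFσ : F σ h = lam * F μ h + (1 - lam) * F π h := by
      simp only [hF, hσ, Measure.add_apply, Measure.smul_apply, smul_eq_mul]
    rw [hFσ]
    calc ENNReal.ofReal p = (lam + (1 - lam)) * ENNReal.ofReal p := by
          rw [add_tsub_cancel_of_le hlam, one_mul]
      _ = lam * ENNReal.ofReal p + (1 - lam) * ENNReal.ofReal p := by ring
      _ ≤ lam * F μ h + (1 - lam) * F π h := by gcongr
  · -- lower semicontinuity
    intro α
    have hset : {μ : ProbabilityMeasure 𝒳 | Q μ ≤ α}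
        = ⋂ n : ℕ, {μ : ProbabilityMeasure 𝒳 |
            ENNReal.ofReal p ≤ (μ : Measure 𝒳) {x | G x ≤ α + 1 / (n + 1)}} := by
      ext ν
      simp only [Set.mem_iInter, Set.mem_setOf_eq]
      rw [hkey]
      constructor
      · intro hall n
        have hpos : (0:ℝ) < 1 / (n+1) := by positivity
        exact hall (α + 1 / (n + 1)) (by linarith)
      · intro hall h hh
        obtain ⟨n, hn⟩ := exists_nat_one_div_lt (show (0:ℝ) < h - α by linarith)
        exact le_trans (hall n) (hmono ν (by linarith))
    rw [hset]
    refine isClosed_iInter fun n => ?_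
    -- closedness of {μ | ofReal p ≤ μ C} for C closed
    set C := {x : 𝒳 | G x ≤ α + 1 / (n + 1)} with hC
    rw [isClosed_iff_clusterPt]
    intro ν hν
    set L := 𝓝 ν ⊓ 𝓟 {μ : ProbabilityMeasure 𝒳 | ENNReal.ofReal p ≤ (μ : Measure 𝒳) C}
    haveI : L.NeBot := hν
    have h1 : Tendsto (id : ProbabilityMeasure 𝒳 → ProbabilityMeasure 𝒳) L (𝓝 ν) :=
      tendsto_id'.mpr inf_le_left
    have h2 := ProbabilityMeasure.limsup_measure_closed_le_of_tendsto h1 (hCl (α + 1 / (n + 1)))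
    have hev : L.Eventually (fun μ' : ProbabilityMeasure 𝒳 => ENNReal.ofReal p ≤ (μ' : Measure 𝒳) C) :=
      eventually_inf_principal.mpr (Eventually.of_forall fun μ' hμ' => hμ')
    have h3 : ENNReal.ofReal p ≤ L.limsup fun μ' : ProbabilityMeasure 𝒳 => (μ' : Measure 𝒳) C :=
      le_limsup_of_frequently_le hev.frequently
    exact h3.trans h2
end

section
/- Let 𝒳 be a metrizable topological space with its Borel σ-algebra, G : 𝒳 → ℝ a continuous function, and p ∈ (0,1). For a Borel probability measure μ on 𝒳 define F_μ(h) = μ({x : G(x) ≤ h}) and the upper quantile Q_p^R(μ) = inf{h ∈ ℝ : F_μ(h) > p}. Then Q_p^R is quasi-concave and upper semicontinuous on P(𝒳): (i) for all probability measures μ, π and λ ∈ [0,1], Q_p^R(λμ + (1−λ)π) ≥ min{Q_p^R(μ), Q_p^R(π)}; (ii) for every α ∈ ℝ the upper level set {μ ∈ P(𝒳) : Q_p^R(μ) ≥ α} is closed for the topology of weak convergence. -/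
/-!
Passing to the law `ν = μ ∘ G⁻¹`, the upper quantile satisfies `α ≤ Q μ ↔ μ {G < α} ≤ p`:
`α` is below the infimum iff `ν (-∞, h] ≤ p` for every `h < α`, and these measures increase to
`ν (-∞, α)`. So every upper level set of `Q` has the form `{μ | μ U ≤ p}` with `U = {G < α}` open.
Such a set is convex because `μ ↦ μ U` is affine, and weakly closed because `μ ↦ μ U` is lower
semicontinuous by the portmanteau theorem.
-/

open MeasureTheory Filter Topology Set
open scoped ENNReal

noncomputable def upperQuantile (ν : Measure ℝ) (p : ℝ) : ℝ :=
  sInf {h | p < ν.real (Iic h)}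

section UpperQuantile

variable {ν : Measure ℝ} {p : ℝ}

theorem measure_Iio_le_iff {α : ℝ} {c : ℝ≥0∞} : ν (Iio α) ≤ c ↔ ∀ h < α, ν (Iic h) ≤ c := by
  refine ⟨fun hα h hh => (measure_mono (Iic_subset_Iio.2 hh)).trans hα, fun hc => ?_⟩
  obtain ⟨u, hu_mono, hu_lt, hu_lim⟩ := exists_seq_strictMono_tendsto α
  rw [← iUnion_Iic_eq_Iio_of_lt_of_tendsto hu_lt hu_lim,
    Directed.measure_iUnion (s := fun n => Iic (u n))
      (monotone_Iic.comp hu_mono.monotone).directed_le]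
  exact iSup_le fun n => hc _ (hu_lt n)

variable [IsFiniteMeasure ν]

theorem tendsto_measureReal_Iic_atBot : Tendsto (fun x => ν.real (Iic x)) atBot (𝓝 0) := by
  have h := tendsto_measure_iInter_atBot (μ := ν) (fun _ => measurableSet_Iic.nullMeasurableSet)
    monotone_Iic ⟨0, measure_ne_top ν _⟩
  rw [iInter_Iic_eq_empty_iff.2 (by simp), measure_empty] at h
  exact (ENNReal.tendsto_toReal ENNReal.zero_ne_top).comp h

theorem tendsto_measureReal_Iic_atTop :
    Tendsto (fun x => ν.real (Iic x)) atTop (𝓝 (ν.real univ)) :=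
  (ENNReal.tendsto_toReal (measure_ne_top ν univ)).comp (tendsto_measure_Iic_atTop ν)

theorem nonempty_setOf_lt_measureReal_Iic (hp : p < ν.real univ) :
    {h | p < ν.real (Iic h)}.Nonempty :=
  ((tendsto_measureReal_Iic_atTop (ν := ν)).eventually (lt_mem_nhds hp)).exists

theorem bddBelow_setOf_lt_measureReal_Iic (hp : 0 < p) : BddBelow {h | p < ν.real (Iic h)} := by
  obtain ⟨b, hb⟩ :=
    eventually_atBot.1 ((tendsto_measureReal_Iic_atBot (ν := ν)).eventually (gt_mem_nhds hp))
  exact ⟨b, fun h hh => le_of_not_ge fun hhb => (hb h hhb).not_gt hh⟩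

theorem le_upperQuantile_iff (hp₀ : 0 < p) (hp₁ : p < ν.real univ) {α : ℝ} :
    α ≤ upperQuantile ν p ↔ ν (Iio α) ≤ ENNReal.ofReal p := by
  rw [upperQuantile, le_csInf_iff (bddBelow_setOf_lt_measureReal_Iic hp₀)
    (nonempty_setOf_lt_measureReal_Iic hp₁), measure_Iio_le_iff]
  refine forall_congr' fun h => ?_
  rw [ENNReal.le_ofReal_iff_toReal_le (measure_ne_top ν _) hp₀.le, ← measureReal_def, ← not_lt,
    ← not_lt]
  exact imp_not_comm

end UpperQuantile

theorem measure_smul_add_one_sub_smul_le {X : Type*} [MeasurableSpace X] {μ π : Measure X}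
    {s : Set X} {c lam : ℝ≥0∞} (hlam : lam ≤ 1) (hμ : μ s ≤ c) (hπ : π s ≤ c) :
    (lam • μ + (1 - lam) • π) s ≤ c :=
  calc (lam • μ + (1 - lam) • π) s = lam * μ s + (1 - lam) * π s := rfl
    _ ≤ lam * c + (1 - lam) * c := by gcongr
    _ = c := by rw [← add_mul, add_tsub_cancel_of_le hlam, one_mul]

theorem ProbabilityMeasure.lowerSemicontinuous_apply_of_isOpen {Ω : Type*} [MeasurableSpace Ω]
    [TopologicalSpace Ω] [OpensMeasurableSpace Ω] [HasOuterApproxClosed Ω] {U : Set Ω}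
    (hU : IsOpen U) : LowerSemicontinuous fun μ : ProbabilityMeasure Ω => (μ : Measure Ω) U :=
  lowerSemicontinuous_iff_le_liminf.2 fun _ =>
    ProbabilityMeasure.le_liminf_measure_open_of_tendsto tendsto_id hU

theorem stmt_8
    {𝒳 : Type*} [TopologicalSpace 𝒳] [TopologicalSpace.MetrizableSpace 𝒳]
    [MeasurableSpace 𝒳] [BorelSpace 𝒳]
    (G : 𝒳 → ℝ) (hG : Continuous G) (p : ℝ) (hp : p ∈ Set.Ioo (0 : ℝ) 1)
    (Q : ProbabilityMeasure 𝒳 → ℝ)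
    (hQ : Q = fun (μ : ProbabilityMeasure 𝒳) => sInf {h : ℝ | p < ((μ : Measure 𝒳) {x | G x ≤ h}).toReal}) :
    (∀ (μ π σ : ProbabilityMeasure 𝒳) (lam : ℝ≥0∞), lam ≤ 1 →
      (σ : Measure 𝒳) = lam • (μ : Measure 𝒳) + (1 - lam) • (π : Measure 𝒳) →
      min (Q μ) (Q π) ≤ Q σ) ∧
    ∀ α : ℝ, IsClosed {μ : ProbabilityMeasure 𝒳 | α ≤ Q μ} := by
  have hQ_map (μ : ProbabilityMeasure 𝒳) : Q μ = upperQuantile ((μ : Measure 𝒳).map G) p := by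
    simp only [hQ, upperQuantile, measureReal_def, Measure.map_apply hG.measurable measurableSet_Iic]
    rfl
  have hlevel (μ : ProbabilityMeasure 𝒳) (α : ℝ) :
      α ≤ Q μ ↔ (μ : Measure 𝒳) (G ⁻¹' Iio α) ≤ ENNReal.ofReal p := by
    have := Measure.isProbabilityMeasure_map (μ := (μ : Measure 𝒳)) hG.aemeasurable
    rw [hQ_map, le_upperQuantile_iff hp.1 (by simpa using hp.2),
      Measure.map_apply hG.measurable measurableSet_Iio]
  refine ⟨fun μ π σ lam hlam hσ => ?_, fun α => ?_⟩
  · rw [hlevel, hσ]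
    exact measure_smul_add_one_sub_smul_le hlam ((hlevel μ _).1 (min_le_left _ _))
      ((hlevel π _).1 (min_le_right _ _))
  · simp_rw [hlevel]
    exact (ProbabilityMeasure.lowerSemicontinuous_apply_of_isOpen
      (hG.isOpen_preimage _ isOpen_Iio)).isClosed_preimage _
end

section
/- Let X be a Polish space and ℓ : X → ℝ a bounded continuous function with ℓ(θ) > 0 for every θ ∈ X. Define the posterior map Ψ : P(X) → P(X) by Ψ(π)(B) = (∫_B ℓ dπ) / (∫_X ℓ dπ) for Borel sets B (equivalently, Ψ(π) is the probability measure with density ℓ / ∫ℓ dπ with respect to π). Then Ψ is continuous for the topology of weak convergence on P(X). -/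
/-!
The posterior `Ψ π` has density `ℓ / ∫ ℓ dπ` with respect to `π`, so for every bounded continuous
`f` we have `∫ f d(Ψ π) = (∫ ℓ f dπ) / (∫ ℓ dπ)`. Both numerator and denominator are integrals of
bounded continuous functions, hence continuous in `π` for the weak topology, and the denominator
never vanishes because `ℓ > 0`.
-/

open MeasureTheory

namespace MeasureTheory

variable {α : Type*} [MeasurableSpace α]

lemma integral_pos_of_forall_pos {μ : Measure α} [NeZero μ] {f : α → ℝ} (hf : Integrable f μ)
    (hpos : ∀ x, 0 < f x) : 0 < ∫ x, f x ∂μ := by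
  rw [integral_pos_iff_support_of_nonneg (fun x ↦ (hpos x).le) hf,
    Function.support_eq_univ fun x ↦ (hpos x).ne']
  exact Measure.measure_univ_pos.2 (NeZero.ne μ)

lemma Measure.eq_withDensity_ofReal_of_forall_apply_eq {μ ν : Measure α} {g : α → ℝ}
    (hg : Integrable g μ) (hg_nonneg : ∀ x, 0 ≤ g x)
    (h : ∀ s, MeasurableSet s → ν s = ENNReal.ofReal (∫ x in s, g x ∂μ)) :
    ν = μ.withDensity fun x ↦ ENNReal.ofReal (g x) := by
  ext s hs
  rw [h s hs, withDensity_apply _ hs,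
    ofReal_integral_eq_lintegral_ofReal hg.restrict (ae_of_all _ hg_nonneg)]

lemma integral_eq_integral_mul_of_forall_apply_eq {μ ν : Measure α} {g : α → ℝ}
    (hg : Integrable g μ) (hg_nonneg : ∀ x, 0 ≤ g x)
    (h : ∀ s, MeasurableSet s → ν s = ENNReal.ofReal (∫ x in s, g x ∂μ)) (f : α → ℝ) :
    ∫ x, f x ∂ν = ∫ x, g x * f x ∂μ := by
  rw [Measure.eq_withDensity_ofReal_of_forall_apply_eq hg hg_nonneg h,
    integral_withDensity_eq_integral_toReal_smul₀ hg.aemeasurable.ennreal_ofReal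
      (ae_of_all _ fun _ ↦ ENNReal.ofReal_lt_top)]
  simp only [ENNReal.toReal_ofReal (hg_nonneg _), smul_eq_mul]

end MeasureTheory

namespace MeasureTheory.ProbabilityMeasure

variable {X : Type*} [TopologicalSpace X] [MeasurableSpace X] [OpensMeasurableSpace X]

lemma continuous_of_integral_eq_div {Ψ : ProbabilityMeasure X → ProbabilityMeasure X}
    (L : BoundedContinuousFunction X ℝ) (hL : ∀ π : ProbabilityMeasure X, ∫ x, L x ∂π ≠ 0)
    (hΨ : ∀ (π : ProbabilityMeasure X) (f : BoundedContinuousFunction X ℝ),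
      ∫ x, f x ∂(Ψ π) = (∫ x, L x * f x ∂π) / ∫ x, L x ∂π) :
    Continuous Ψ := by
  refine continuous_iff_forall_continuous_integral.2 fun f ↦ ?_
  simp only [hΨ]
  exact (continuous_integral_boundedContinuousFunction (L * f)).div
    (continuous_integral_boundedContinuousFunction L) hL

end MeasureTheory.ProbabilityMeasure

theorem stmt_10_general
    {X : Type*} [TopologicalSpace X] [MeasurableSpace X] [BorelSpace X]
    (ℓ : X → ℝ) (hℓc : Continuous ℓ) (hℓb : ∃ C : ℝ, ∀ x, |ℓ x| ≤ C) (hℓpos : ∀ θ, 0 < ℓ θ)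
    (Ψ : ProbabilityMeasure X → ProbabilityMeasure X)
    (hΨ : ∀ (π : ProbabilityMeasure X) (B : Set X), MeasurableSet B →
      (Ψ π : Measure X) B =
        ENNReal.ofReal ((∫ x in B, ℓ x ∂(π : Measure X)) / ∫ x, ℓ x ∂(π : Measure X))) :
    Continuous Ψ := by
  obtain ⟨C, hC⟩ := hℓb
  let L := BoundedContinuousFunction.ofNormedAddCommGroup ℓ hℓc C hC
  have hZ (π : ProbabilityMeasure X) : 0 < ∫ x, ℓ x ∂(π : Measure X) :=
    integral_pos_of_forall_pos (L.integrable _) hℓpos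
  refine ProbabilityMeasure.continuous_of_integral_eq_div L (fun π ↦ (hZ π).ne') fun π f ↦ ?_
  have hdens (B : Set X) (hB : MeasurableSet B) : (Ψ π : Measure X) B =
      ENNReal.ofReal (∫ x in B, ℓ x / ∫ y, ℓ y ∂(π : Measure X) ∂(π : Measure X)) := by
    rw [hΨ π B hB, integral_div]
  rw [integral_eq_integral_mul_of_forall_apply_eq ((L.integrable _).div_const _)
    (fun x ↦ div_nonneg (hℓpos x).le (hZ π).le) hdens]
  simp only [div_mul_eq_mul_div, integral_div]
  rfl

theorem stmt_10
    {X : Type*} [TopologicalSpace X] [PolishSpace X] [MeasurableSpace X] [BorelSpace X]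
    (ℓ : X → ℝ) (hℓc : Continuous ℓ) (hℓb : ∃ C : ℝ, ∀ x, |ℓ x| ≤ C) (hℓpos : ∀ θ, 0 < ℓ θ)
    (Ψ : ProbabilityMeasure X → ProbabilityMeasure X)
    (hΨ : ∀ (π : ProbabilityMeasure X) (B : Set X), MeasurableSet B →
      (Ψ π : Measure X) B =
        ENNReal.ofReal ((∫ x in B, ℓ x ∂(π : Measure X)) / ∫ x, ℓ x ∂(π : Measure X))) :
    Continuous Ψ :=
  stmt_10_general ℓ hℓc hℓb hℓpos Ψ hΨ
end

section
/- Let E be a real topological vector space, A ⊆ E a convex set, Ψ₁ : E → E a linear map and Ψ₂ : E → ℝ a linear functional with Ψ₂(μ) > 0 for all μ ∈ A, and suppose the ratio map R(μ) = Ψ₂(μ)⁻¹ · Ψ₁(μ) maps A into A. Let f : E → ℝ be quasi-convex on A. Then: (i) f ∘ R is quasi-convex on A, i.e. for all π, μ ∈ A and λ ∈ [0,1], f(R(λπ + (1−λ)μ)) ≤ max{f(R(π)), f(R(μ))}; (ii) if moreover R is continuous on A and f is lower semicontinuous on A, then f ∘ R is lower semicontinuous on A, i.e. for every α ∈ ℝ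 the set {μ ∈ A : f(R(μ)) ≤ α} is closed in A. -/
theorem stmt_11
    {E : Type*} [AddCommGroup E] [Module ℝ E] [TopologicalSpace E]
    (A : Set E) (hA : Convex ℝ A)
    (Ψ₁ : E →ₗ[ℝ] E) (Ψ₂ : E →ₗ[ℝ] ℝ) (hΨ₂ : ∀ μ ∈ A, 0 < Ψ₂ μ)
    (R : E → E) (hR : R = fun μ => (Ψ₂ μ)⁻¹ • Ψ₁ μ) (hRA : ∀ μ ∈ A, R μ ∈ A)
    (f : E → ℝ)
    (hf : ∀ x ∈ A, ∀ y ∈ A, ∀ lam : ℝ, lam ∈ Set.Icc (0 : ℝ) 1 →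
      f (lam • x + (1 - lam) • y) ≤ max (f x) (f y)) :
    (∀ π ∈ A, ∀ μ ∈ A, ∀ lam : ℝ, lam ∈ Set.Icc (0 : ℝ) 1 →
      f (R (lam • π + (1 - lam) • μ)) ≤ max (f (R π)) (f (R μ))) ∧
    (ContinuousOn R A → (∀ α : ℝ, IsClosed {x : A | f (x : E) ≤ α}) →
      ∀ α : ℝ, IsClosed {x : A | f (R (x : E)) ≤ α}) := by
  constructor
  · intro π hπ μ hμ lam hlam
    obtain ⟨hl0, hl1⟩ := hlam
    have ha := hΨ₂ π hπ
    have hb := hΨ₂ μ hμ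
    have hs : 0 < lam * Ψ₂ π + (1 - lam) * Ψ₂ μ := by
      rcases lt_or_eq_of_le hl0 with h | h
      · have h1 : 0 < lam * Ψ₂ π := mul_pos h ha
        have h2 : 0 ≤ (1 - lam) * Ψ₂ μ :=
          mul_nonneg (by linarith) hb.le
        linarith
      · have : lam = 0 := h.symm
        subst this
        simpa using hb
    set s := lam * Ψ₂ π + (1 - lam) * Ψ₂ μ with hsdef
    set t := lam * Ψ₂ π / s with htdef
    have ht0 : 0 ≤ t := div_nonneg (mul_nonneg hl0 ha.le) hs.le
    have ht1 : t ≤ 1 := by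
      rw [htdef, div_le_one hs]
      have h2 : 0 ≤ (1 - lam) * Ψ₂ μ := mul_nonneg (by linarith) hb.le
      linarith
    have key : R (lam • π + (1 - lam) • μ) = t • R π + (1 - t) • R μ := by
      subst hR
      simp only [map_add, map_smul, smul_eq_mul]
      rw [← hsdef]
      have h1t : 1 - t = (1 - lam) * Ψ₂ μ / s := by
        rw [htdef]
        field_simp
        rw [hsdef]; ring
      rw [h1t, htdef]
      match_scalars
      · field_simp [hs.ne']
      · field_simp [hs.ne']
    rw [key]
    exact hf (R π) (hRA π hπ) (R μ) (hRA μ hμ) t ⟨ht0, ht1⟩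
  · intro hRcont hlsc α
    have hg : Continuous (fun x : A => (⟨R x, hRA x x.2⟩ : A)) := by
      apply Continuous.subtype_mk
      exact continuousOn_iff_continuous_restrict.mp hRcont
    exact (hlsc α).preimage hg
end

section
/- Let Ω be a real locally convex topological vector space with its Borel σ-algebra, A ⊆ Ω a convex set, and Δ ⊆ A. Suppose that every point x ∈ A is the barycenter of some Borel probability measure ν on Ω with ν(Δ) = 1, in the sense that every continuous linear functional l : Ω → ℝ is ν-integrable and l(x) = ∫ l dν. Then A is contained in the closed convex hull of Δ: A ⊆ closure(convexHull(Δ)). -/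
/-! A point `x` outside the closed convex set `closure (convexHull ℝ Δ)` is strictly separated
from it by a continuous linear functional `l` with `l x < u < l y` on that set (Hahn–Banach).
A probability measure carried by `Δ` then has `∫ l dν ≥ u > l x`, so `x` is not its barycenter. -/

open MeasureTheory

theorem ae_mem_of_subset_of_measure_eq_one {X : Type*} [MeasurableSpace X] {μ : Measure X}
    [IsProbabilityMeasure μ] {Δ C : Set X} (hC : MeasurableSet C) (hΔC : Δ ⊆ C)
    (hΔ : μ Δ = 1) : ∀ᵐ y ∂μ, y ∈ C := by
  rw [ae_mem_iff_measure_eq hC.nullMeasurableSet, measure_univ]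
  exact le_antisymm prob_le_one (hΔ ▸ measure_mono hΔC)

section

variable {E : Type*} [AddCommGroup E] [Module ℝ E] [TopologicalSpace E] [MeasurableSpace E]

def IsBarycenter (μ : Measure E) (x : E) : Prop :=
  ∀ l : E →L[ℝ] ℝ, Integrable (fun y => l y) μ ∧ l x = ∫ y, l y ∂μ

theorem IsBarycenter.mem_of_ae_mem [IsTopologicalAddGroup E] [ContinuousSMul ℝ E]
    [LocallyConvexSpace ℝ E] {μ : Measure E} [IsProbabilityMeasure μ] {x : E} {C : Set E}
    (hx : IsBarycenter μ x) (hconv : Convex ℝ C) (hclosed : IsClosed C)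
    (hμC : ∀ᵐ y ∂μ, y ∈ C) : x ∈ C := by
  by_contra hxC
  obtain ⟨l, u, hlx, hlC⟩ := geometric_hahn_banach_point_closed hconv hclosed hxC
  obtain ⟨hint, hlx_eq⟩ := hx l
  have hu_le : u ≤ l x :=
    calc u = ∫ _, u ∂μ := by simp
      _ ≤ ∫ y, l y ∂μ :=
        integral_mono_ae (integrable_const u) hint (hμC.mono fun y hy => (hlC y hy).le)
      _ = l x := hlx_eq.symm
  exact hu_le.not_gt hlx

end

theorem stmt_12_general
    {Ω : Type*} [AddCommGroup Ω] [Module ℝ Ω] [TopologicalSpace Ω]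
    [IsTopologicalAddGroup Ω] [ContinuousSMul ℝ Ω] [LocallyConvexSpace ℝ Ω]
    [MeasurableSpace Ω] [BorelSpace Ω]
    (A Δ : Set Ω)
    (hbary : ∀ x ∈ A, ∃ ν : Measure Ω, IsProbabilityMeasure ν ∧ ν Δ = 1 ∧
      ∀ l : Ω →L[ℝ] ℝ, Integrable (fun y => l y) ν ∧ l x = ∫ y, l y ∂ν) :
    A ⊆ closure (convexHull ℝ Δ) := by
  intro x hx
  obtain ⟨ν, hν, hνΔ, hνx⟩ := hbary x hx
  exact IsBarycenter.mem_of_ae_mem hνx (convex_convexHull ℝ Δ).closure isClosed_closure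
    (ae_mem_of_subset_of_measure_eq_one isClosed_closure.measurableSet
      ((subset_convexHull ℝ Δ).trans subset_closure) hνΔ)

theorem stmt_12
    {Ω : Type*} [AddCommGroup Ω] [Module ℝ Ω] [TopologicalSpace Ω]
    [IsTopologicalAddGroup Ω] [ContinuousSMul ℝ Ω] [LocallyConvexSpace ℝ Ω]
    [MeasurableSpace Ω] [BorelSpace Ω]
    (A Δ : Set Ω) (hAconv : Convex ℝ A) (hΔA : Δ ⊆ A)
    (hbary : ∀ x ∈ A, ∃ ν : Measure Ω, IsProbabilityMeasure ν ∧ ν Δ = 1 ∧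
      ∀ l : Ω →L[ℝ] ℝ, Integrable (fun y => l y) ν ∧ l x = ∫ y, l y ∂ν) :
    A ⊆ closure (convexHull ℝ Δ) :=
  stmt_12_general A Δ hbary
end

section
/- Let Ω be a real locally convex topological vector space with its Borel σ-algebra, A ⊆ Ω a closed convex set, and Δ ⊆ A. Suppose every point x ∈ A is the barycenter of some Borel probability measure ν on Ω with ν(Δ) = 1 (i.e. every continuous linear functional l is ν-integrable and l(x) = ∫ l dν). Let f : Ω → ℝ be quasi-convex on A and lower semicontinuous on A. Then sup_{x ∈ A} f(x) = sup_{x ∈ Δ} f(x); equivalently, for every real a, if f(s) ≤ a for all s ∈ Δ then f(x) ≤ a for all x ∈ A. -/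
/-!
If `f x > a` for some `x ∈ A`, the sublevel set `{y ∈ A | f y ≤ a}` is closed and convex (lower
semicontinuity and quasi-convexity) and contains `Δ`, so every representing measure of `x` is
concentrated on it. A continuous functional strictly separating `x` from this set would then
have `l x = ∫ l dν ≤ u < l x`.
-/

open MeasureTheory

theorem ae_mem_of_measure_eq_one {α : Type*} [MeasurableSpace α] {ν : Measure α}
    [IsProbabilityMeasure ν] {s t : Set α} (hs : ν s = 1) (hst : s ⊆ t) (ht : MeasurableSet t) :
    ∀ᵐ y ∂ν, y ∈ t := by
  rw [ae_mem_iff_measure_eq ht.nullMeasurableSet, measure_univ]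
  exact le_antisymm prob_le_one (hs ▸ measure_mono hst)

theorem IsClosed.mem_of_forall_clm_eq_integral {E : Type*} [AddCommGroup E] [Module ℝ E]
    [TopologicalSpace E] [IsTopologicalAddGroup E] [ContinuousSMul ℝ E] [LocallyConvexSpace ℝ E]
    [MeasurableSpace E] {C : Set E} (hCc : IsClosed C) (hC : Convex ℝ C) {ν : Measure E}
    [IsProbabilityMeasure ν] (hνC : ∀ᵐ y ∂ν, y ∈ C) {x : E}
    (hx : ∀ l : E →L[ℝ] ℝ, Integrable (fun y => l y) ν ∧ l x = ∫ y, l y ∂ν) : x ∈ C := by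
  by_contra hxC
  obtain ⟨l, u, hlu, hux⟩ := geometric_hahn_banach_closed_point hC hCc hxC
  have hint_le : ∫ y, l y ∂ν ≤ u :=
    calc ∫ y, l y ∂ν ≤ ∫ _, u ∂ν :=
          integral_mono_ae (hx l).1 (integrable_const u) (hνC.mono fun y hy => (hlu y hy).le)
      _ = u := by simp
  linarith [(hx l).2]

theorem biSup_coe_eq_of_forall_le {α : Type*} {s t : Set α} (f : α → ℝ) (hst : s ⊆ t)
    (h : ∀ a : ℝ, (∀ x ∈ s, f x ≤ a) → ∀ x ∈ t, f x ≤ a) :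
    (⨆ x ∈ t, (f x : EReal)) = ⨆ x ∈ s, (f x : EReal) := by
  refine le_antisymm (iSup₂_le fun x hx => ?_) (biSup_mono hst)
  by_contra hlt
  obtain ⟨a, hSa, hax⟩ := EReal.lt_iff_exists_real_btwn.1 (not_le.1 hlt)
  have hs : ∀ y ∈ s, f y ≤ a := fun y hy =>
    EReal.coe_le_coe_iff.1 ((le_iSup₂_of_le y hy le_rfl).trans hSa.le)
  exact (EReal.coe_lt_coe_iff.1 hax).not_ge (h a hs x hx)

theorem stmt_14_general
    {Ω : Type*} [AddCommGroup Ω] [Module ℝ Ω] [TopologicalSpace Ω]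
    [IsTopologicalAddGroup Ω] [ContinuousSMul ℝ Ω] [LocallyConvexSpace ℝ Ω]
    [MeasurableSpace Ω] [BorelSpace Ω]
    (A Δ : Set Ω) (hAconv : Convex ℝ A) (hΔA : Δ ⊆ A)
    (hbary : ∀ x ∈ A, ∃ ν : Measure Ω, IsProbabilityMeasure ν ∧ ν Δ = 1 ∧
      ∀ l : Ω →L[ℝ] ℝ, Integrable (fun y => l y) ν ∧ l x = ∫ y, l y ∂ν)
    (f : Ω → ℝ)
    (hfqc : ∀ x ∈ A, ∀ y ∈ A, ∀ lam : ℝ, lam ∈ Set.Icc (0 : ℝ) 1 →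
      f (lam • x + (1 - lam) • y) ≤ max (f x) (f y))
    (hflsc : ∀ a : ℝ, IsClosed {x ∈ A | f x ≤ a}) :
    (⨆ x ∈ A, (f x : EReal)) = ⨆ x ∈ Δ, (f x : EReal) := by
  have hqc : QuasiconvexOn ℝ A f := by
    refine quasiconvexOn_iff_le_max.2 ⟨hAconv, fun x hx y hy a b ha hb hab => ?_⟩
    obtain rfl : b = 1 - a := by linarith
    exact hfqc x hx y hy a ⟨ha, by linarith⟩
  refine biSup_coe_eq_of_forall_le f hΔA fun a ha x hx => ?_
  obtain ⟨ν, hν, hνΔ, hbar⟩ := hbary x hx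
  have hΔsub : Δ ⊆ {y ∈ A | f y ≤ a} := fun s hs => ⟨hΔA hs, ha s hs⟩
  exact ((hflsc a).mem_of_forall_clm_eq_integral (hqc a)
    (ae_mem_of_measure_eq_one hνΔ hΔsub (hflsc a).measurableSet) hbar).2

theorem stmt_14
    {Ω : Type*} [AddCommGroup Ω] [Module ℝ Ω] [TopologicalSpace Ω]
    [IsTopologicalAddGroup Ω] [ContinuousSMul ℝ Ω] [LocallyConvexSpace ℝ Ω]
    [MeasurableSpace Ω] [BorelSpace Ω]
    (A Δ : Set Ω) (hAc : IsClosed A) (hAconv : Convex ℝ A) (hΔA : Δ ⊆ A)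
    (hbary : ∀ x ∈ A, ∃ ν : Measure Ω, IsProbabilityMeasure ν ∧ ν Δ = 1 ∧
      ∀ l : Ω →L[ℝ] ℝ, Integrable (fun y => l y) ν ∧ l x = ∫ y, l y ∂ν)
    (f : Ω → ℝ)
    (hfqc : ∀ x ∈ A, ∀ y ∈ A, ∀ lam : ℝ, lam ∈ Set.Icc (0 : ℝ) 1 →
      f (lam • x + (1 - lam) • y) ≤ max (f x) (f y))
    (hflsc : ∀ a : ℝ, IsClosed {x ∈ A | f x ≤ a}) :
    (⨆ x ∈ A, (f x : EReal)) = ⨆ x ∈ Δ, (f x : EReal) :=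
  stmt_14_general A Δ hAconv hΔA hbary f hfqc hflsc
end
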